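/- arXiv:math-ph/0009022 — 7 statements merged into one kernel-verified Lean document; each statement's English description precedes it below -/
import Mathlib

section
/- Suppose smooth functions q, p, u, v, w, R of s satisfy the system: u' = -q², v' = -qp, w' = -p², (1+s²)q' = -(as+v)q + (β₀ - (2a-1)u)p, (1+s²)p' = -(γ₀ + (2a+1)w)q + (as+v)p, and (1+s²)R = (γ₀+(2a+1)w)q² + (β₀-(2a-1)u)p² - 2(as+v)qp, with all of q, p, u, v, w and (1+s²)R tending to 0 as s → ∞. Then the first integral (1+s²)R = 2av holds identically. -/
/-!
Differentiating the quadratic form `(γ₀+(2a+1)w)q² + (β₀-(2a-1)u)p² - 2(as+v)qp` along the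
system gives exactly `-2aqp = 2av'`, so this form minus `2av` is constant on `(s₀, ∞)`; its limit
at infinity is `0`, hence it vanishes identically.
-/

open Filter Set Topology

theorem eqOn_Ioi_of_hasDerivAt_zero_of_tendsto_atTop {G : Type*} [NormedAddCommGroup G]
    [NormedSpace ℝ G] {f : ℝ → G} {s₀ : ℝ} {L : G}
    (hf : ∀ s ∈ Ioi s₀, HasDerivAt f 0 s) (hL : Tendsto f atTop (𝓝 L)) :
    EqOn f (fun _ => L) (Ioi s₀) := by
  intro x hx
  have hconst : ∀ y ∈ Ioi s₀, f y = f x := fun y hy =>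
    isOpen_Ioi.is_const_of_deriv_eq_zero isPreconnected_Ioi
      (fun s hs => (hf s hs).differentiableAt.differentiableWithinAt)
      (fun s hs => (hf s hs).deriv) hy hx
  have hx_lim : Tendsto f atTop (𝓝 (f x)) :=
    tendsto_const_nhds.congr' <| by
      filter_upwards [eventually_gt_atTop s₀] with y hy
      exact (hconst y hy).symm
  exact tendsto_nhds_unique hx_lim hL

/-- `(1+s²)R - 2av`, with `(1+s²)R` written as the quadratic form in `(q, p)`. -/
def firstIntegralDefect (a β₀ γ₀ : ℝ) (q p u v w : ℝ → ℝ) (s : ℝ) : ℝ :=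
  (γ₀ + (2 * a + 1) * w s) * q s ^ 2 + (β₀ - (2 * a - 1) * u s) * p s ^ 2 -
    2 * (a * s + v s) * (q s * p s) - 2 * a * v s

theorem hasDerivAt_firstIntegralDefect {a β₀ γ₀ s : ℝ} {q p u v w : ℝ → ℝ}
    (hu : HasDerivAt u (-(q s) ^ 2) s)
    (hv : HasDerivAt v (-(q s * p s)) s)
    (hw : HasDerivAt w (-(p s) ^ 2) s)
    (hq : HasDerivAt q
      ((-(a * s + v s) * q s + (β₀ - (2 * a - 1) * u s) * p s) / (1 + s ^ 2)) s)
    (hp : HasDerivAt p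
      ((-(γ₀ + (2 * a + 1) * w s) * q s + (a * s + v s) * p s) / (1 + s ^ 2)) s) :
    HasDerivAt (firstIntegralDefect a β₀ γ₀ q p u v w) 0 s := by
  have hγ := (hw.const_mul (2 * a + 1)).const_add γ₀
  have hβ := (hu.const_mul (2 * a - 1)).const_sub β₀
  have hlin := ((hasDerivAt_id s).const_mul a).add hv
  have hD := ((((hγ.mul (hq.pow 2)).add (hβ.mul (hp.pow 2))).sub
    ((hlin.const_mul 2).mul (hq.mul hp))).sub (hv.const_mul (2 * a)))
  have : (1 : ℝ) + s ^ 2 ≠ 0 := by positivity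
  refine hD.congr_deriv ?_
  simp only [Pi.pow_apply, Pi.mul_apply, Pi.add_apply, id]
  field_simp
  ring

theorem stmt7_general (a β₀ γ₀ s₀ : ℝ)
    (q p u v w R : ℝ → ℝ)
    (hu : ∀ s ∈ Set.Ioi s₀, HasDerivAt u (-(q s) ^ 2) s)
    (hv : ∀ s ∈ Set.Ioi s₀, HasDerivAt v (-(q s * p s)) s)
    (hw : ∀ s ∈ Set.Ioi s₀, HasDerivAt w (-(p s) ^ 2) s)
    (hq : ∀ s ∈ Set.Ioi s₀, HasDerivAt q
      ((-(a * s + v s) * q s + (β₀ - (2 * a - 1) * u s) * p s) / (1 + s ^ 2)) s)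
    (hp : ∀ s ∈ Set.Ioi s₀, HasDerivAt p
      ((-(γ₀ + (2 * a + 1) * w s) * q s + (a * s + v s) * p s) / (1 + s ^ 2)) s)
    (hR : ∀ s ∈ Set.Ioi s₀, (1 + s ^ 2) * R s =
      (γ₀ + (2 * a + 1) * w s) * (q s) ^ 2 + (β₀ - (2 * a - 1) * u s) * (p s) ^ 2 -
        2 * (a * s + v s) * (q s * p s))
    (hv0 : Tendsto v atTop (nhds 0))
    (hR0 : Tendsto (fun s => (1 + s ^ 2) * R s) atTop (nhds 0)) :
    ∀ s ∈ Set.Ioi s₀, (1 + s ^ 2) * R s = 2 * a * v s := by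
  have hdefect : ∀ s ∈ Ioi s₀,
      firstIntegralDefect a β₀ γ₀ q p u v w s = (1 + s ^ 2) * R s - 2 * a * v s := by
    intro s hs
    rw [hR s hs, firstIntegralDefect]
  have hlim : Tendsto (firstIntegralDefect a β₀ γ₀ q p u v w) atTop (𝓝 0) := by
    have := hR0.sub (hv0.const_mul (2 * a))
    rw [mul_zero, sub_zero] at this
    refine this.congr' ?_
    filter_upwards [eventually_gt_atTop s₀] with s hs
    exact (hdefect s hs).symm
  intro s hs
  have hzero := eqOn_Ioi_of_hasDerivAt_zero_of_tendsto_atTop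
    (fun t ht => hasDerivAt_firstIntegralDefect (hu t ht) (hv t ht) (hw t ht) (hq t ht) (hp t ht))
    hlim hs
  linarith [hdefect s hs]

/-- First integral `(1+s²)R = 2av` for the Tracy–Widom coupled system of the Cauchy
unitary ensemble on the interval `(s,∞)`. -/
theorem stmt7 (a β₀ γ₀ s₀ : ℝ) (ha : a ≠ 0)
    (q p u v w R : ℝ → ℝ)
    (hu : ∀ s ∈ Set.Ioi s₀, HasDerivAt u (-(q s) ^ 2) s)
    (hv : ∀ s ∈ Set.Ioi s₀, HasDerivAt v (-(q s * p s)) s)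
    (hw : ∀ s ∈ Set.Ioi s₀, HasDerivAt w (-(p s) ^ 2) s)
    (hq : ∀ s ∈ Set.Ioi s₀, HasDerivAt q
      ((-(a * s + v s) * q s + (β₀ - (2 * a - 1) * u s) * p s) / (1 + s ^ 2)) s)
    (hp : ∀ s ∈ Set.Ioi s₀, HasDerivAt p
      ((-(γ₀ + (2 * a + 1) * w s) * q s + (a * s + v s) * p s) / (1 + s ^ 2)) s)
    (hR : ∀ s ∈ Set.Ioi s₀, (1 + s ^ 2) * R s =
      (γ₀ + (2 * a + 1) * w s) * (q s) ^ 2 + (β₀ - (2 * a - 1) * u s) * (p s) ^ 2 -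
        2 * (a * s + v s) * (q s * p s))
    (hq0 : Tendsto q atTop (nhds 0)) (hp0 : Tendsto p atTop (nhds 0))
    (hu0 : Tendsto u atTop (nhds 0)) (hv0 : Tendsto v atTop (nhds 0))
    (hw0 : Tendsto w atTop (nhds 0))
    (hR0 : Tendsto (fun s => (1 + s ^ 2) * R s) atTop (nhds 0)) :
    ∀ s ∈ Set.Ioi s₀, (1 + s ^ 2) * R s = 2 * a * v s :=
  stmt7_general a β₀ γ₀ s₀ q p u v w R hu hv hw hq hp hR hv0 hR0
end

section
/- Let σ(s) = (1+s²)R(s) where R, q, p, u, v, w satisfy the coupled Cauchy single-interval system with decay at infinity. Then σ satisfies the second-order second-degree ODE (1+s²)²(σ'')² + 4(1+s²)(σ')³ - 8sσ(σ')² + 4σ²(σ' - a²) + 8a²sσσ' + 4[N(N+2a) - a²s²](σ')² = 0. -/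
open Filter Set Topology

/-!
Since `σ' = -2a q p = 2a v'` and both `σ` and `v` vanish at infinity, `σ = 2a v`. Using this,
`W = 4a²(B G + s σ + 2a(1+s²) q p) - σ²`, with `B = β₀ - (2a-1)u` and `G = γ₀ + (2a+1)w`, is a
first integral of the system. Its value is read off at infinity: `W → 4a²(β₀γ₀ + L)` with
`L = lim (s σ + 2a(1+s²) q p) = lim s (G q² + B p²)`, where `G q² + B p²` is comparable to
`q² + p²` because `G → γ₀ > 0` and `B → β₀ > 0`. If `L > 0` then
`q² + p² ≥ c/s`, so `u + w`, whose derivative is `-(q² + p²)`, would diverge logarithmically.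
Hence `W = 4a²β₀γ₀ = 4a²N(N+2a)`, and the ODE becomes a polynomial identity in
`σ = Gq² + Bp² - 2(as+v)qp`, `σ' = -2a qp` and `(1+s²)σ'' = 2a(Gq² - Bp²)`.
-/

theorem tendsto_of_hasDerivAt_zero {f : ℝ → ℝ} {s₀ s : ℝ}
    (hf : ∀ t ∈ Ioi s₀, HasDerivAt f 0 t) (hs : s ∈ Ioi s₀) :
    Tendsto f atTop (𝓝 (f s)) := by
  have hconst : ∀ t ∈ Ioi s₀, f t = f s := fun t ht =>
    isOpen_Ioi.is_const_of_deriv_eq_zero isPreconnected_Ioi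
      (fun x hx => (hf x hx).differentiableAt.differentiableWithinAt)
      (fun x hx => (hf x hx).deriv) ht hs
  exact tendsto_const_nhds.congr' <|
    mem_of_superset (Ioi_mem_atTop s₀) fun t ht => (hconst t ht).symm

theorem tendsto_atBot_of_hasDerivAt_le_neg_div {g g' : ℝ → ℝ} {c : ℝ} (hc : 0 < c)
    (h : ∀ᶠ t in atTop, HasDerivAt g (g' t) t ∧ g' t ≤ -c / t) :
    Tendsto g atTop atBot := by
  obtain ⟨t₀, ht₀⟩ := eventually_atTop.1 (h.and (eventually_gt_atTop 0))
  have hderiv : ∀ t ∈ Ioi t₀, HasDerivAt (fun t => g t + c * Real.log t) (g' t + c * t⁻¹) t :=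
    fun t ht => (ht₀ t ht.le).1.1.add ((Real.hasDerivAt_log (ht₀ t ht.le).2.ne').const_mul c)
  have hanti : AntitoneOn (fun t => g t + c * Real.log t) (Ioi t₀) := by
    refine antitoneOn_of_hasDerivWithinAt_nonpos (f' := fun t => g' t + c * t⁻¹) (convex_Ioi t₀)
      (fun t ht => (hderiv t ht).continuousAt.continuousWithinAt) ?_ ?_
    · simpa only [interior_Ioi] using fun t ht => (hderiv t ht).hasDerivWithinAt
    · intro t ht
      rw [interior_Ioi] at ht
      have := (ht₀ t ht.le).1.2
      rw [neg_div, div_eq_mul_inv] at this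
      linarith
  have hlog : Tendsto (fun t => g (t₀ + 1) + c * Real.log (t₀ + 1) - c * Real.log t)
      atTop atBot :=
    tendsto_atBot_add_const_left _ _ <| tendsto_neg_atTop_atBot.comp <|
      Real.tendsto_log_atTop.const_mul_atTop hc
  refine tendsto_atBot_mono' _ ?_ hlog
  filter_upwards [eventually_ge_atTop (t₀ + 1)] with t ht
  have := hanti (show t₀ + 1 ∈ Ioi t₀ by simp) (show t ∈ Ioi t₀ by simp; linarith) ht
  simp only at this
  linarith

theorem tendsto_of_abs_sub_le_add_mul_abs {Φ F δ ε : ℝ → ℝ} {L : ℝ}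
    (hF : Tendsto F atTop (𝓝 L)) (hδ : Tendsto δ atTop (𝓝 0)) (hε : Tendsto ε atTop (𝓝 0))
    (h : ∀ᶠ t in atTop, |Φ t - F t| ≤ δ t + ε t * |Φ t|) :
    Tendsto Φ atTop (𝓝 L) := by
  have hbound : ∀ᶠ t in atTop, |Φ t| ≤ 2 * (|L| + 2) := by
    have hF1 := (hF.sub_const L).abs
    rw [sub_self, abs_zero] at hF1
    filter_upwards [h, hF1.eventually (eventually_le_nhds one_pos),
      hδ.eventually (eventually_le_nhds one_pos),
      hε.eventually (eventually_le_nhds one_half_pos)] with t ht hFt hδt hεt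
    have : ε t * |Φ t| ≤ 1 / 2 * |Φ t| := by gcongr
    have := abs_sub_abs_le_abs_sub (Φ t) (F t)
    have := abs_sub_abs_le_abs_sub (F t) L
    linarith
  have hdiff : Tendsto (fun t => Φ t - F t) atTop (𝓝 0) := by
    refine squeeze_zero_norm' ?_ (by simpa using hδ.add (hε.abs.mul_const (2 * (|L| + 2))))
    filter_upwards [h, hbound] with t ht hbt
    calc ‖Φ t - F t‖ ≤ δ t + ε t * |Φ t| := ht
      _ ≤ δ t + |ε t| * (2 * (|L| + 2)) := by
        grw [le_abs_self (ε t), hbt]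
  simpa using hdiff.add hF

theorem exists_eventually_weighted_sq_bounds {B G x y : ℝ → ℝ} {b g : ℝ} (hb : 0 < b)
    (hg : 0 < g) (hB : Tendsto B atTop (𝓝 b)) (hG : Tendsto G atTop (𝓝 g)) :
    ∃ m M : ℝ, 0 < m ∧ 0 < M ∧ ∀ᶠ t in atTop,
      m * (x t ^ 2 + y t ^ 2) ≤ G t * x t ^ 2 + B t * y t ^ 2 ∧
      G t * x t ^ 2 + B t * y t ^ 2 ≤ M * (x t ^ 2 + y t ^ 2) := by
  have hm : 0 < min b g / 2 := by positivity
  have hmb : min b g / 2 < b := by linarith [min_le_left b g]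
  have hmg : min b g / 2 < g := by linarith [min_le_right b g]
  have hMb : b < max b g + 1 := by linarith [le_max_left b g]
  have hMg : g < max b g + 1 := by linarith [le_max_right b g]
  refine ⟨min b g / 2, max b g + 1, hm, by linarith, ?_⟩
  filter_upwards [hB.eventually (eventually_ge_nhds hmb), hB.eventually (eventually_le_nhds hMb),
    hG.eventually (eventually_ge_nhds hmg), hG.eventually (eventually_le_nhds hMg)]
    with t hB₁ hB₂ hG₁ hG₂
  constructor <;> nlinarith [sq_nonneg (x t), sq_nonneg (y t)]

theorem tendsto_weighted_energy {q p v B G σ : ℝ → ℝ} {a b g L : ℝ} (hb : 0 < b) (hg : 0 < g)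
    (hB : Tendsto B atTop (𝓝 b)) (hG : Tendsto G atTop (𝓝 g)) (hv : Tendsto v atTop (𝓝 0))
    (hqp : Tendsto (fun t => q t * p t) atTop (𝓝 0))
    (hσ : ∀ᶠ t in atTop,
      σ t = G t * q t ^ 2 + B t * p t ^ 2 - 2 * (a * t + v t) * (q t * p t))
    (hF : Tendsto (fun t => t * σ t + 2 * a * ((1 + t ^ 2) * (q t * p t))) atTop (𝓝 L)) :
    Tendsto (fun t => t * (G t * q t ^ 2 + B t * p t ^ 2)) atTop (𝓝 L) := by
  obtain ⟨m, M, hm, -, hbounds⟩ :=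
    exists_eventually_weighted_sq_bounds (x := q) (y := p) hb hg hB hG
  refine tendsto_of_abs_sub_le_add_mul_abs hF (δ := fun t => |2 * a * (q t * p t)|)
    (ε := fun t => |v t| / m) (by simpa using (hqp.const_mul (2 * a)).abs)
    (by simpa using hv.abs.div_const m) ?_
  filter_upwards [hσ, hbounds, eventually_gt_atTop 0] with t hσt hbt ht
  have hΦ : 0 ≤ t * (G t * q t ^ 2 + B t * p t ^ 2) :=
    mul_nonneg ht.le ((by positivity : 0 ≤ m * (q t ^ 2 + p t ^ 2)).trans hbt.1)
  have hqp2 : 2 * |q t * p t| ≤ q t ^ 2 + p t ^ 2 := by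
    rw [abs_mul]
    nlinarith [sq_nonneg (|q t| - |p t|), sq_abs (q t), sq_abs (p t)]
  have hcross :
      2 * t * |v t| * |q t * p t| ≤ |v t| / m * (t * (G t * q t ^ 2 + B t * p t ^ 2)) := by
    rw [div_mul_eq_mul_div, le_div_iff₀ hm]
    calc 2 * t * |v t| * |q t * p t| * m ≤ t * |v t| * (m * (q t ^ 2 + p t ^ 2)) := by
          linear_combination (t * |v t| * m) * hqp2
      _ ≤ t * |v t| * (G t * q t ^ 2 + B t * p t ^ 2) := by grw [hbt.1]
      _ = |v t| * (t * (G t * q t ^ 2 + B t * p t ^ 2)) := by ring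
  calc |t * (G t * q t ^ 2 + B t * p t ^ 2) - (t * σ t + 2 * a * ((1 + t ^ 2) * (q t * p t)))|
      = |2 * a * (q t * p t) - 2 * t * v t * (q t * p t)| := by
        rw [hσt, abs_sub_comm]; ring_nf
    _ ≤ |2 * a * (q t * p t)| + 2 * t * |v t| * |q t * p t| := by
        refine (abs_sub _ _).trans (le_of_eq ?_)
        rw [abs_mul (2 * t * v t), abs_mul (2 * t), abs_of_pos (by positivity : (0 : ℝ) < 2 * t)]
    _ ≤ |2 * a * (q t * p t)| + |v t| / m * |t * (G t * q t ^ 2 + B t * p t ^ 2)| := by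
        rw [abs_of_nonneg hΦ]; linarith

theorem weighted_energy_limit_eq_zero {q p f B G : ℝ → ℝ} {b g L ℓ : ℝ} (hb : 0 < b) (hg : 0 < g)
    (hB : Tendsto B atTop (𝓝 b)) (hG : Tendsto G atTop (𝓝 g))
    (hΦ : Tendsto (fun t => t * (G t * q t ^ 2 + B t * p t ^ 2)) atTop (𝓝 L))
    (hf : Tendsto f atTop (𝓝 ℓ))
    (hf' : ∀ᶠ t in atTop, HasDerivAt f (-(q t ^ 2 + p t ^ 2)) t) : L = 0 := by
  obtain ⟨m, M, hm, hM, hbounds⟩ :=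
    exists_eventually_weighted_sq_bounds (x := q) (y := p) hb hg hB hG
  have hL₀ : 0 ≤ L := by
    refine ge_of_tendsto hΦ ?_
    filter_upwards [hbounds, eventually_gt_atTop 0] with t hbt ht
    exact mul_nonneg ht.le ((by positivity : 0 ≤ m * (q t ^ 2 + p t ^ 2)).trans hbt.1)
  refine le_antisymm (not_lt.1 fun hL => ?_) hL₀
  refine not_tendsto_atBot_of_tendsto_nhds hf <|
    tendsto_atBot_of_hasDerivAt_le_neg_div (g' := fun t => -(q t ^ 2 + p t ^ 2))
      (c := L / (2 * M)) (by positivity) ?_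
  filter_upwards [hf', hbounds, hΦ.eventually (eventually_ge_nhds (half_lt_self hL)),
    eventually_gt_atTop 0] with t hft hbt hΦt ht
  refine ⟨hft, ?_⟩
  rw [neg_div, neg_le_neg_iff, div_div, div_le_iff₀ (by positivity)]
  nlinarith [hbt.2]

noncomputable def firstIntegral (a β₀ γ₀ : ℝ) (q p u w σ : ℝ → ℝ) (t : ℝ) : ℝ :=
  4 * a ^ 2 * ((β₀ - (2 * a - 1) * u t) * (γ₀ + (2 * a + 1) * w t) + t * σ t +
    2 * a * ((1 + t ^ 2) * (q t * p t))) - σ t ^ 2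

theorem hasDerivAt_firstIntegral {a β₀ γ₀ s : ℝ} {q p u v w σ : ℝ → ℝ}
    (hu : HasDerivAt u (-(q s) ^ 2) s) (hw : HasDerivAt w (-(p s) ^ 2) s)
    (hq : HasDerivAt q
      ((-(a * s + v s) * q s + (β₀ - (2 * a - 1) * u s) * p s) / (1 + s ^ 2)) s)
    (hp : HasDerivAt p
      ((-(γ₀ + (2 * a + 1) * w s) * q s + (a * s + v s) * p s) / (1 + s ^ 2)) s)
    (hσ : HasDerivAt σ (-2 * a * (q s * p s)) s)
    (hR : σ s = (γ₀ + (2 * a + 1) * w s) * (q s) ^ 2 + (β₀ - (2 * a - 1) * u s) * (p s) ^ 2 -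
        2 * (a * s + v s) * (q s * p s))
    (hσv : σ s = 2 * a * v s) :
    HasDerivAt (firstIntegral a β₀ γ₀ q p u w σ) 0 s := by
  have hB := (hu.const_mul (2 * a - 1)).const_sub β₀
  have hG := (hw.const_mul (2 * a + 1)).const_add γ₀
  have hs2 : HasDerivAt (fun t : ℝ => 1 + t ^ 2) (2 * s) s := by
    simpa using (hasDerivAt_pow 2 s).const_add 1
  have hW := (((hB.mul hG).add ((hasDerivAt_id s).mul hσ)).add
    ((hs2.mul (hq.mul hp)).const_mul (2 * a))).const_mul (4 * a ^ 2) |>.sub (hσ.pow 2)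
  refine hW.congr_deriv ?_
  have h1s : (1 : ℝ) + s ^ 2 ≠ 0 := by positivity
  have hqp : ∀ A B : ℝ,
      (1 + s ^ 2) * (A / (1 + s ^ 2) * p s + q s * (B / (1 + s ^ 2))) = A * p s + q s * B := by
    intro A B; field_simp
  simp only [Pi.mul_apply, id_eq, hqp]
  linear_combination (4 * a ^ 2) * hR + (4 * a * (q s * p s)) * hσv

theorem firstIntegral_eq {a β₀ γ₀ s₀ : ℝ} {q p u v w σ : ℝ → ℝ} (ha : a ≠ 0) (hβ₀ : 0 < β₀)
    (hγ₀ : 0 < γ₀) (hW : ∀ s ∈ Ioi s₀, HasDerivAt (firstIntegral a β₀ γ₀ q p u w σ) 0 s)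
    (hu : ∀ s ∈ Ioi s₀, HasDerivAt u (-(q s) ^ 2) s)
    (hw : ∀ s ∈ Ioi s₀, HasDerivAt w (-(p s) ^ 2) s)
    (hR : ∀ s ∈ Ioi s₀, σ s =
      (γ₀ + (2 * a + 1) * w s) * (q s) ^ 2 + (β₀ - (2 * a - 1) * u s) * (p s) ^ 2 -
        2 * (a * s + v s) * (q s * p s))
    (hq0 : Tendsto q atTop (𝓝 0)) (hp0 : Tendsto p atTop (𝓝 0))
    (hu0 : Tendsto u atTop (𝓝 0)) (hv0 : Tendsto v atTop (𝓝 0))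
    (hw0 : Tendsto w atTop (𝓝 0)) (hσ0 : Tendsto σ atTop (𝓝 0)) :
    ∀ s ∈ Ioi s₀, firstIntegral a β₀ γ₀ q p u w σ s = 4 * a ^ 2 * (β₀ * γ₀) := by
  intro s hs
  have hB : Tendsto (fun t => β₀ - (2 * a - 1) * u t) atTop (𝓝 β₀) := by
    simpa using (hu0.const_mul (2 * a - 1)).const_sub β₀
  have hG : Tendsto (fun t => γ₀ + (2 * a + 1) * w t) atTop (𝓝 γ₀) := by
    simpa using (hw0.const_mul (2 * a + 1)).const_add γ₀
  have hF : Tendsto (fun t => t * σ t + 2 * a * ((1 + t ^ 2) * (q t * p t))) atTop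
      (𝓝 ((firstIntegral a β₀ γ₀ q p u w σ s - 4 * a ^ 2 * (β₀ * γ₀)) / (4 * a ^ 2))) := by
    have hlim := (((tendsto_of_hasDerivAt_zero hW hs).sub
      ((hB.mul hG).const_mul (4 * a ^ 2))).add (hσ0.pow 2)).div_const (4 * a ^ 2)
    rw [zero_pow two_ne_zero, add_zero] at hlim
    refine hlim.congr fun t => ?_
    simp only [firstIntegral]
    field_simp
    ring
  have hΦ := tendsto_weighted_energy hβ₀ hγ₀ hB hG hv0 (by simpa using hq0.mul hp0)
    (mem_of_superset (Ioi_mem_atTop s₀) hR) hF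
  have hlim := weighted_energy_limit_eq_zero hβ₀ hγ₀ hB hG hΦ (hu0.add hw0)
    (mem_of_superset (Ioi_mem_atTop s₀) fun t ht =>
      ((hu t ht).add (hw t ht)).congr_deriv (by ring))
  field_simp at hlim
  linarith

theorem one_add_sq_mul_deriv_deriv {a β₀ γ₀ s₀ s : ℝ} {q p u v w σ : ℝ → ℝ}
    (hσ : ∀ t ∈ Ioi s₀, HasDerivAt σ (-2 * a * (q t * p t)) t)
    (hq : HasDerivAt q
      ((-(a * s + v s) * q s + (β₀ - (2 * a - 1) * u s) * p s) / (1 + s ^ 2)) s)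
    (hp : HasDerivAt p
      ((-(γ₀ + (2 * a + 1) * w s) * q s + (a * s + v s) * p s) / (1 + s ^ 2)) s)
    (hs : s ∈ Ioi s₀) :
    (1 + s ^ 2) * deriv (deriv σ) s =
      2 * a * ((γ₀ + (2 * a + 1) * w s) * q s ^ 2 - (β₀ - (2 * a - 1) * u s) * p s ^ 2) := by
  have hderiv : deriv σ =ᶠ[𝓝 s] fun t => -2 * a * (q t * p t) :=
    mem_of_superset (isOpen_Ioi.mem_nhds hs) fun t ht => (hσ t ht).deriv
  have hqp : HasDerivAt (fun t => -2 * a * (q t * p t)) _ s := (hq.mul hp).const_mul (-2 * a)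
  rw [hderiv.deriv_eq, hqp.deriv]
  field_simp
  ring

theorem sigma_ode_of_first_integrals {a s A BG X Y Z v σ σ' σ'' : ℝ} (hσ' : σ' = -2 * a * Z)
    (hσ'' : (1 + s ^ 2) * σ'' = 2 * a * (X - Y)) (hσ : σ = X + Y - 2 * (a * s + v) * Z)
    (hσv : σ = 2 * a * v)
    (hW : 4 * a ^ 2 * (BG + s * σ + 2 * a * ((1 + s ^ 2) * Z)) - σ ^ 2 = 4 * a ^ 2 * A)
    (hXY : X * Y = BG * Z ^ 2) :
    (1 + s ^ 2) ^ 2 * σ'' ^ 2 + 4 * (1 + s ^ 2) * σ' ^ 3 - 8 * s * σ * σ' ^ 2 +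
      4 * σ ^ 2 * (σ' - a ^ 2) + 8 * a ^ 2 * s * σ * σ' + 4 * (A - a ^ 2 * s ^ 2) * σ' ^ 2 = 0 := by
  subst hσ'
  linear_combination (1 + s ^ 2) * σ'' * hσ'' + 2 * a * (X - Y) * hσ'' + (-4 * Z ^ 2) * hW
    + (-16 * a ^ 2) * hXY + (-4 * a * (a * (X + Y) + (σ * Z + a * σ + 2 * a ^ 2 * s * Z))) * hσ
    + (-4 * Z * (a * (X + Y) + (σ * Z + a * σ + 2 * a ^ 2 * s * Z))) * hσv

theorem sqrt_mul_div_mul_sqrt_mul_div {A x y : ℝ} (hA : 0 ≤ A) (hx : 0 < x) (hy : 0 < y) :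
    Real.sqrt (A * x / y) * Real.sqrt (A * y / x) = A := by
  rw [← Real.sqrt_mul (by positivity), show A * x / y * (A * y / x) = A ^ 2 by field_simp,
    Real.sqrt_sq hA]

/-- The function `σ(s) = (1+s²)R(s)` for the Cauchy unitary ensemble on `(s,∞)`
satisfies the second order second degree ODE
`(1+s²)²(σ'')² + 4(1+s²)(σ')³ - 8sσ(σ')² + 4σ²(σ'-a²) + 8a²sσσ'
  + 4[N(N+2a)-a²s²](σ')² = 0`. -/
theorem stmt9 (N : ℕ) (hN : 0 < N) (a β₀ γ₀ s₀ : ℝ) (ha : 1 / 2 < a)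
    (hβ : β₀ = Real.sqrt ((N : ℝ) * (N + 2 * a) * (2 * a - 1) / (2 * a + 1)))
    (hγ : γ₀ = Real.sqrt ((N : ℝ) * (N + 2 * a) * (2 * a + 1) / (2 * a - 1)))
    (q p u v w R : ℝ → ℝ)
    (hu : ∀ s ∈ Set.Ioi s₀, HasDerivAt u (-(q s) ^ 2) s)
    (hv : ∀ s ∈ Set.Ioi s₀, HasDerivAt v (-(q s * p s)) s)
    (hw : ∀ s ∈ Set.Ioi s₀, HasDerivAt w (-(p s) ^ 2) s)
    (hq : ∀ s ∈ Set.Ioi s₀, HasDerivAt q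
      ((-(a * s + v s) * q s + (β₀ - (2 * a - 1) * u s) * p s) / (1 + s ^ 2)) s)
    (hp : ∀ s ∈ Set.Ioi s₀, HasDerivAt p
      ((-(γ₀ + (2 * a + 1) * w s) * q s + (a * s + v s) * p s) / (1 + s ^ 2)) s)
    (hR : ∀ s ∈ Set.Ioi s₀, (1 + s ^ 2) * R s =
      (γ₀ + (2 * a + 1) * w s) * (q s) ^ 2 + (β₀ - (2 * a - 1) * u s) * (p s) ^ 2 -
        2 * (a * s + v s) * (q s * p s))
    (hσ : ∀ s ∈ Set.Ioi s₀,
      HasDerivAt (fun t => (1 + t ^ 2) * R t) (-2 * a * (q s * p s)) s)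
    (hq0 : Tendsto q atTop (nhds 0)) (hp0 : Tendsto p atTop (nhds 0))
    (hu0 : Tendsto u atTop (nhds 0)) (hv0 : Tendsto v atTop (nhds 0))
    (hw0 : Tendsto w atTop (nhds 0))
    (hσ0 : Tendsto (fun s => (1 + s ^ 2) * R s) atTop (nhds 0)) :
    ∀ s ∈ Set.Ioi s₀,
      (1 + s ^ 2) ^ 2 * (deriv (deriv (fun t => (1 + t ^ 2) * R t)) s) ^ 2 +
        4 * (1 + s ^ 2) * (deriv (fun t => (1 + t ^ 2) * R t) s) ^ 3 -
        8 * s * ((1 + s ^ 2) * R s) * (deriv (fun t => (1 + t ^ 2) * R t) s) ^ 2 +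
        4 * ((1 + s ^ 2) * R s) ^ 2 * (deriv (fun t => (1 + t ^ 2) * R t) s - a ^ 2) +
        8 * a ^ 2 * s * ((1 + s ^ 2) * R s) * deriv (fun t => (1 + t ^ 2) * R t) s +
        4 * ((N : ℝ) * (N + 2 * a) - a ^ 2 * s ^ 2) *
          (deriv (fun t => (1 + t ^ 2) * R t) s) ^ 2 = 0 := by
  intro s hs
  have ha₀ : 0 < a := by linarith
  have hA : 0 < (N : ℝ) * (N + 2 * a) := by positivity
  have hβ₀ : 0 < β₀ := hβ ▸ Real.sqrt_pos.2 (by apply div_pos <;> nlinarith)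
  have hγ₀ : 0 < γ₀ := hγ ▸ Real.sqrt_pos.2 (by apply div_pos <;> nlinarith)
  have hβγ : β₀ * γ₀ = N * (N + 2 * a) := by
    rw [hβ, hγ, sqrt_mul_div_mul_sqrt_mul_div hA.le (by linarith) (by linarith)]
  have hσv : ∀ t ∈ Ioi s₀, (1 + t ^ 2) * R t = 2 * a * v t := by
    intro t ht
    have hconst := tendsto_of_hasDerivAt_zero (f := fun t => (1 + t ^ 2) * R t - 2 * a * v t)
      (fun t ht => ((hσ t ht).sub ((hv t ht).const_mul (2 * a))).congr_deriv (by ring)) ht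
    have := tendsto_nhds_unique hconst (by simpa using hσ0.sub (hv0.const_mul (2 * a)))
    linarith
  have hW := firstIntegral_eq ha₀.ne' hβ₀ hγ₀ (fun t ht => hasDerivAt_firstIntegral (hu t ht)
    (hw t ht) (hq t ht) (hp t ht) (hσ t ht) (hR t ht) (hσv t ht))
    hu hw hR hq0 hp0 hu0 hv0 hw0 hσ0 s hs
  rw [hβγ] at hW
  exact sigma_ode_of_first_integrals ((hσ s hs).deriv.trans (by ring))
    (one_add_sq_mul_deriv_deriv hσ (hq s hs) (hp s hs) hs) (hR s hs) (hσv s hs) hW (by ring)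
end

section
/- Define X(s) = 1 - [Γ(a+1)/(2√π Γ(a+3/2))] s^{-2a-1} · ₂F₁(a+1, a+1/2; a+3/2; -s^{-2}) for s > 0. Then X(s) = 1/2 + [Γ(a+1)/(√π Γ(a+1/2))] s · ₂F₁(a+1, 1/2; 3/2; -s²). -/
/-!
Everything reduces to integrals of `(1 + t²)^(-a-1)`. With `c = b + 1` Euler's integral is
`b ∫₀¹ u^(b-1) (1 + z u)^(-a-1) du`; the substitution `u = t²/s²` turns
`s ₂F₁(a+1, 1/2; 3/2; -s²)` into `∫₀ˢ`, and `u = s²/t²` turns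
`s^(-2a-1) ₂F₁(a+1, a+1/2; a+3/2; -s⁻²)` into `(2a+1) ∫ₛ^∞`. Finally `u = 1/(1+t²)` identifies
`2 ∫₀^∞` with the Beta integral `B(a+1/2, 1/2) = √π Γ(a+1/2)/Γ(a+1)`, so splitting `∫₀^∞` at `s`
gives the identity.
-/

open MeasureTheory

/-- The Gauss hypergeometric function `₂F₁(a,b;c;z)` (for `c > b > 0`, `z < 1`),
defined via the Euler integral representation. -/
noncomputable def hyp2F1 (a b c z : ℝ) : ℝ :=
  (Real.Gamma c / (Real.Gamma b * Real.Gamma (c - b))) *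
    ∫ t in Set.Ioo (0 : ℝ) 1, t ^ (b - 1) * (1 - t) ^ (c - b - 1) * (1 - z * t) ^ (-a)

open Set Real

theorem integral_Ioo_rpow_mul_one_sub_rpow {u v : ℝ} (hu : 0 < u) (hv : 0 < v) :
    ∫ x in Ioo (0:ℝ) 1, x ^ (u - 1) * (1 - x) ^ (v - 1) = Gamma u * Gamma v / Gamma (u + v) := by
  have hcast : ∫ x in Ioo (0:ℝ) 1, (x : ℂ) ^ ((u : ℂ) - 1) * (1 - (x : ℂ)) ^ ((v : ℂ) - 1) =
      ((∫ x in Ioo (0:ℝ) 1, x ^ (u - 1) * (1 - x) ^ (v - 1) : ℝ) : ℂ) := by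
    rw [← integral_complex_ofReal]
    refine setIntegral_congr_fun measurableSet_Ioo fun x hx => ?_
    push_cast [Complex.ofReal_cpow hx.1.le, Complex.ofReal_cpow (sub_nonneg.2 hx.2.le)]
    rfl
  have h := Complex.betaIntegral_eq_Gamma_mul_div u v (by simpa) (by simpa)
  rw [Complex.betaIntegral, intervalIntegral.integral_of_le zero_le_one,
    integral_Ioc_eq_integral_Ioo, hcast, ← Complex.ofReal_add, Complex.Gamma_ofReal,
    Complex.Gamma_ofReal, Complex.Gamma_ofReal] at h
  exact_mod_cast h

theorem hyp2F1_add_one_neg (A b z : ℝ) (hb : 0 < b) :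
    hyp2F1 A b (b + 1) (-z) = b * ∫ u in Ioo (0:ℝ) 1, u ^ (b - 1) * (1 + z * u) ^ (-A) := by
  rw [hyp2F1, add_sub_cancel_left, Gamma_one, Gamma_add_one hb.ne', mul_one,
    mul_div_cancel_right₀ _ (Gamma_pos_of_pos hb).ne']
  congr 1
  refine setIntegral_congr_fun measurableSet_Ioo fun u _ => ?_
  simp

theorem integral_Ioo_rpow_neg_half_mul_comp_sq_mul {s : ℝ} (hs : 0 < s) (g : ℝ → ℝ) :
    ∫ u in Ioo (0:ℝ) 1, u ^ (-(1 / 2) : ℝ) * g (s ^ 2 * u) = 2 / s * ∫ t in (0)..s, g (t ^ 2) := by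
  set φ : ℝ → ℝ := fun t => t ^ 2 / s ^ 2
  have hmono : StrictMonoOn φ (Icc 0 s) := fun x hx y _ hxy =>
    div_lt_div_of_pos_right (pow_lt_pow_left₀ hxy hx.1 two_ne_zero) (by positivity)
  have himage : φ '' Ioo 0 s = Ioo 0 1 := by
    rw [(by fun_prop : Continuous φ).continuousOn.image_Ioo_of_strictMonoOn hs.le hmono]
    simp [φ, hs.ne']
  have hderiv : ∀ t ∈ Ioo 0 s, HasDerivWithinAt φ (2 * t / s ^ 2) (Ioo 0 s) t := fun t _ => by
    simpa using ((hasDerivAt_pow 2 t).div_const (s ^ 2)).hasDerivWithinAt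
  rw [intervalIntegral.integral_of_le hs.le, integral_Ioc_eq_integral_Ioo, ← himage,
    integral_image_eq_integral_abs_deriv_smul measurableSet_Ioo hderiv
      (hmono.injOn.mono Ioo_subset_Icc_self), ← integral_const_mul]
  refine setIntegral_congr_fun measurableSet_Ioo fun t ⟨ht, _⟩ => ?_
  have hpow : (t ^ 2 / s ^ 2) ^ (-(1 / 2) : ℝ) = s / t := by
    rw [← div_pow, rpow_neg (by positivity), ← sqrt_eq_rpow, sqrt_sq (by positivity), inv_div]
  have harg : s ^ 2 * (t ^ 2 / s ^ 2) = t ^ 2 := mul_div_cancel₀ _ (by positivity)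
  simp only [φ, smul_eq_mul, hpow, harg, abs_of_pos (by positivity : 0 < 2 * t / s ^ 2)]
  field_simp

theorem integral_Ioo_rpow_mul_one_add_inv_sq_mul_rpow {s : ℝ} (hs : 0 < s) (a : ℝ) :
    ∫ u in Ioo (0:ℝ) 1, u ^ (a - 1 / 2) * (1 + (s ^ 2)⁻¹ * u) ^ (-(a + 1)) =
      2 * s ^ (2 * a + 1) * ∫ t in Ioi s, (1 + t ^ 2) ^ (-(a + 1)) := by
  set φ : ℝ → ℝ := fun t => s ^ 2 / t ^ 2
  have hanti : StrictAntiOn φ (Ioi s) := fun x (hx : s < x) y _ hxy =>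
    div_lt_div_of_pos_left (by positivity) (pow_pos (hs.trans hx) 2)
      (pow_lt_pow_left₀ hxy (hs.trans hx).le two_ne_zero)
  have himage : φ '' Ioi s = Ioo 0 1 := by
    refine Subset.antisymm ?_ fun u ⟨hu0, hu1⟩ => ⟨s / √u, ?_, ?_⟩
    · rintro _ ⟨t, ht : s < t, rfl⟩
      have ht0 : 0 < t := hs.trans ht
      exact ⟨by positivity, (div_lt_one (by positivity)).2 (pow_lt_pow_left₀ ht hs.le two_ne_zero)⟩
    · refine (lt_div_iff₀ (sqrt_pos.2 hu0)).2 (mul_lt_of_lt_one_right hs ?_)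
      exact (sqrt_lt' one_pos).2 (by simpa using hu1)
    · simp only [φ, div_pow, sq_sqrt hu0.le]
      field_simp
  have hderiv : ∀ t ∈ Ioi s, HasDerivWithinAt φ (-(2 * s ^ 2 / t ^ 3)) (Ioi s) t := by
    intro t ht
    have ht0 : t ≠ 0 := (hs.trans ht).ne'
    refine (((hasDerivAt_pow 2 t).inv (pow_ne_zero 2 ht0)).const_mul (s ^ 2)).hasDerivWithinAt
      |>.congr_deriv ?_ |>.congr (fun _ _ => div_eq_mul_inv _ _) (div_eq_mul_inv _ _)
    field_simp
    ring
  rw [← himage, integral_image_eq_integral_abs_deriv_smul measurableSet_Ioi hderiv hanti.injOn,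
    ← integral_const_mul]
  refine setIntegral_congr_fun measurableSet_Ioi fun t (ht : s < t) => ?_
  have ht0 : 0 < t := hs.trans ht
  have hbase : 1 + (s ^ 2)⁻¹ * (s ^ 2 / t ^ 2) = (1 + t ^ 2) * (t ^ 2)⁻¹ := by
    field_simp
    ring
  rw [smul_eq_mul, abs_neg, abs_of_pos (by positivity), hbase,
    mul_rpow (by positivity) (by positivity), inv_rpow (by positivity), ← rpow_neg (by positivity),
    div_rpow (by positivity) (by positivity), ← rpow_natCast_mul hs.le,
    ← rpow_natCast_mul ht0.le, ← rpow_natCast_mul ht0.le]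
  have hs' : s ^ (2 * a + 1) = s ^ 2 * s ^ ((2:ℕ) * (a - 1 / 2)) := by
    rw [← rpow_natCast, ← rpow_add hs]; push_cast; ring_nf
  have ht' : t ^ (((2:ℕ):ℝ) * -(-(a + 1))) = t ^ 3 * t ^ ((2:ℕ) * (a - 1 / 2)) := by
    rw [← rpow_natCast, ← rpow_add ht0]; push_cast; ring_nf
  rw [hs', ht']
  field_simp

theorem integral_Ioo_rpow_mul_one_sub_rpow_neg_half (a : ℝ) :
    ∫ u in Ioo (0:ℝ) 1, u ^ (a - 1 / 2) * (1 - u) ^ (-(1 / 2) : ℝ) =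
      2 * ∫ t in Ioi (0:ℝ), (1 + t ^ 2) ^ (-(a + 1)) := by
  set φ : ℝ → ℝ := fun t => (1 + t ^ 2)⁻¹
  have hanti : StrictAntiOn φ (Ioi 0) := fun x (hx : 0 < x) y _ hxy =>
    inv_strictAnti₀ (by positivity) (by gcongr)
  have himage : φ '' Ioi 0 = Ioo 0 1 := by
    refine Subset.antisymm ?_ fun u ⟨hu0, hu1⟩ => ⟨√(u⁻¹ - 1), ?_, ?_⟩
    · rintro _ ⟨t, ht : 0 < t, rfl⟩
      exact ⟨by positivity, inv_lt_one_of_one_lt₀ (by nlinarith)⟩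
    · exact sqrt_pos.2 (sub_pos.2 (one_lt_inv₀ hu0 |>.2 hu1))
    · simp only [φ, sq_sqrt (sub_pos.2 (one_lt_inv₀ hu0 |>.2 hu1)).le, add_sub_cancel, inv_inv]
  have hderiv : ∀ t ∈ Ioi (0:ℝ), HasDerivWithinAt φ (-(2 * t / (1 + t ^ 2) ^ 2)) (Ioi 0) t := by
    intro t _
    refine ((hasDerivAt_pow 2 t).const_add 1 |>.inv (by positivity)).hasDerivWithinAt
      |>.congr_deriv ?_
    simp [neg_div]
  rw [← himage, integral_image_eq_integral_abs_deriv_smul measurableSet_Ioi hderiv hanti.injOn,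
    ← integral_const_mul]
  refine setIntegral_congr_fun measurableSet_Ioi fun t (ht : 0 < t) => ?_
  have hX : 0 < 1 + t ^ 2 := by positivity
  have hbase : 1 - (1 + t ^ 2)⁻¹ = t ^ 2 * (1 + t ^ 2)⁻¹ := by
    field_simp
    ring
  have hsq : (t ^ 2) ^ (-(1 / 2) : ℝ) = t⁻¹ := by
    rw [rpow_neg (sq_nonneg t), ← sqrt_eq_rpow, sqrt_sq ht.le]
  have hexp : (1 + t ^ 2) ^ (1 / 2 : ℝ) =
      (1 + t ^ 2) ^ (-(a + 1)) * (1 + t ^ 2) ^ 2 * (1 + t ^ 2) ^ (a - 1 / 2) := by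
    rw [← rpow_two (1 + t ^ 2), ← rpow_add hX, ← rpow_add hX]
    ring_nf
  rw [smul_eq_mul, abs_neg, abs_of_pos (by positivity), hbase,
    mul_rpow (by positivity) (by positivity), hsq, inv_rpow hX.le, inv_rpow hX.le, rpow_neg hX.le,
    inv_inv, hexp]
  field_simp

theorem integrable_one_add_sq_rpow_neg {c : ℝ} (hc : 1 / 2 < c) :
    Integrable fun t : ℝ => (1 + t ^ 2) ^ (-c) := by
  have h := integrable_rpow_neg_one_add_norm_sq (E := ℝ) (μ := volume) (r := 2 * c)
    (by rw [Module.finrank_self, Nat.cast_one]; linarith)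
  simpa [neg_div, mul_div_cancel_left₀] using h

theorem integral_Ioi_one_add_sq_rpow_neg {a : ℝ} (ha : -(1 / 2) < a) :
    ∫ t in Ioi (0:ℝ), (1 + t ^ 2) ^ (-(a + 1)) = √π * Gamma (a + 1 / 2) / (2 * Gamma (a + 1)) := by
  have h := integral_Ioo_rpow_mul_one_sub_rpow (u := a + 1 / 2) (v := 1 / 2) (by linarith)
    one_half_pos
  rw [show a + 1 / 2 - 1 = a - 1 / 2 by ring, show (1 / 2 - 1 : ℝ) = -(1 / 2) by norm_num,
    integral_Ioo_rpow_mul_one_sub_rpow_neg_half, Gamma_one_half_eq,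
    show a + 1 / 2 + 1 / 2 = a + 1 by ring] at h
  have hΓ : Gamma (a + 1) ≠ 0 := (Gamma_pos_of_pos (by linarith)).ne'
  rw [eq_div_iff (mul_ne_zero two_ne_zero hΓ)]
  linear_combination (eq_div_iff hΓ).1 h

theorem mul_hyp2F1_half_three_halves_neg_sq (A : ℝ) {s : ℝ} (hs : 0 < s) :
    s * hyp2F1 A (1 / 2) (3 / 2) (-s ^ 2) = ∫ t in (0)..s, (1 + t ^ 2) ^ (-A) := by
  rw [show (3 / 2 : ℝ) = 1 / 2 + 1 by norm_num, hyp2F1_add_one_neg _ _ _ one_half_pos,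
    show (1 / 2 - 1 : ℝ) = -(1 / 2) by norm_num,
    integral_Ioo_rpow_neg_half_mul_comp_sq_mul hs fun x => (1 + x) ^ (-A)]
  field_simp

theorem rpow_mul_hyp2F1_neg_inv_sq {a : ℝ} (ha : -(1 / 2) < a) {s : ℝ} (hs : 0 < s) :
    s ^ (-2 * a - 1) * hyp2F1 (a + 1) (a + 1 / 2) (a + 3 / 2) (-(s ^ 2)⁻¹) =
      (2 * a + 1) * ∫ t in Ioi s, (1 + t ^ 2) ^ (-(a + 1)) := by
  rw [show a + 3 / 2 = a + 1 / 2 + 1 by ring, hyp2F1_add_one_neg _ _ _ (by linarith),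
    show a + 1 / 2 - 1 = a - 1 / 2 by ring, integral_Ioo_rpow_mul_one_add_inv_sq_mul_rpow hs,
    show -2 * a - 1 = -(2 * a + 1) by ring, rpow_neg hs.le]
  field_simp

/-- The two expressions for `X(s)`:
`1 - [Γ(a+1)/(2√π Γ(a+3/2))] s^{-2a-1} ₂F₁(a+1,a+1/2;a+3/2;-s^{-2})
  = 1/2 + [Γ(a+1)/(√π Γ(a+1/2))] s ₂F₁(a+1,1/2;3/2;-s²)` for `s > 0`. -/
theorem stmt10 (a : ℝ) (ha : 0 < a) (s : ℝ) (hs : 0 < s) :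
    1 - Real.Gamma (a + 1) / (2 * Real.sqrt Real.pi * Real.Gamma (a + 3 / 2)) *
        s ^ (-2 * a - 1) * hyp2F1 (a + 1) (a + 1 / 2) (a + 3 / 2) (-(s ^ (2 : ℝ))⁻¹) =
      1 / 2 + Real.Gamma (a + 1) / (Real.sqrt Real.pi * Real.Gamma (a + 1 / 2)) *
        s * hyp2F1 (a + 1) (1 / 2) (3 / 2) (-s ^ 2) := by
  have ha' : -(1 / 2) < a := by linarith
  have hf := integrable_one_add_sq_rpow_neg (c := a + 1) (by linarith)
  have hsplit := intervalIntegral.integral_interval_add_Ioi (a := 0) (b := s)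
    hf.integrableOn hf.integrableOn
  rw [integral_Ioi_one_add_sq_rpow_neg ha'] at hsplit
  rw [rpow_two, mul_assoc _ (s ^ _), rpow_mul_hyp2F1_neg_inv_sq ha' hs, mul_assoc _ s,
    mul_hyp2F1_half_three_halves_neg_sq _ hs, eq_sub_of_add_eq' hsplit,
    show a + 3 / 2 = a + 1 / 2 + 1 by ring, Gamma_add_one (s := a + 1 / 2) (by linarith)]
  have hG₁ : Gamma (a + 1) ≠ 0 := (Gamma_pos_of_pos (by linarith)).ne'
  have hG₂ : Gamma (a + 1 / 2) ≠ 0 := (Gamma_pos_of_pos (by linarith)).ne'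
  have hπ : √π ≠ 0 := (sqrt_pos.2 pi_pos).ne'
  field_simp
  ring
end

section
/- Suppose τ₀ and u₀ are related by -τ₀ = (1/(4u₀))[x u₀'/(u₀-1) - u₀]² + x²u₀/(u₀-1)², and -τ₀' = -x/(4u₀(u₀-1))·[u₀' - u₀(u₀-1)/x]² - xu₀/(u₀-1), and define τ₁ by -τ₁ = (1/(4u₀))[x u₀'/(u₀-1) - u₀]² - u₀ + x²u₀/(u₀-1)². Then τ₁(x) = 1 + τ₀(x) - x τ₀'(x)/τ₀(x). -/
/-!
The two relations defining `τ₁` and `τ₀` differ only by the term `-u₀`, so `τ₁ = τ₀ + u₀`.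
The prescribed derivative of `τ₀` is, after clearing denominators, the identity
`x τ₀' = (1 - u₀) τ₀`, so `x τ₀' / τ₀ = 1 - u₀` and the claim follows.
-/

lemma mul_painleveV_tau_deriv {x u p : ℝ} (hx : x ≠ 0) (hu1 : u ≠ 1) :
    x * (-(-(x / (4 * u * (u - 1))) * (p - u * (u - 1) / x) ^ 2 - x * u / (u - 1))) =
      -((1 / (4 * u)) * (x * p / (u - 1) - u) ^ 2 + x ^ 2 * u / (u - 1) ^ 2) * (1 - u) := by
  have hu1' : u - 1 ≠ 0 := sub_ne_zero.mpr hu1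
  field_simp
  ring

theorem stmt13_general (u₀ τ₀ τ₁ : ℝ → ℝ)
    (hu1 : ∀ x ∈ Set.Ioi (0 : ℝ), u₀ x ≠ 1)
    (hτ0 : ∀ x ∈ Set.Ioi (0 : ℝ), τ₀ x ≠ 0)
    (hrel0 : ∀ x ∈ Set.Ioi (0 : ℝ), -τ₀ x =
      (1 / (4 * u₀ x)) * (x * deriv u₀ x / (u₀ x - 1) - u₀ x) ^ 2 +
        x ^ 2 * u₀ x / (u₀ x - 1) ^ 2)
    (hrel0' : ∀ x ∈ Set.Ioi (0 : ℝ), HasDerivAt τ₀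
      (-(-(x / (4 * u₀ x * (u₀ x - 1))) *
          (deriv u₀ x - u₀ x * (u₀ x - 1) / x) ^ 2 -
        x * u₀ x / (u₀ x - 1))) x)
    (hrel1 : ∀ x ∈ Set.Ioi (0 : ℝ), -τ₁ x =
      (1 / (4 * u₀ x)) * (x * deriv u₀ x / (u₀ x - 1) - u₀ x) ^ 2 - u₀ x +
        x ^ 2 * u₀ x / (u₀ x - 1) ^ 2) :
    ∀ x ∈ Set.Ioi (0 : ℝ), τ₁ x = 1 + τ₀ x - x * deriv τ₀ x / τ₀ x := by
  intro x hx
  have hτ₁ : τ₁ x = τ₀ x + u₀ x := by linarith [hrel0 x hx, hrel1 x hx]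
  have hlog : x * deriv τ₀ x = τ₀ x * (1 - u₀ x) := by
    rw [(hrel0' x hx).deriv, mul_painleveV_tau_deriv (ne_of_gt hx) (hu1 x hx),
      ← hrel0 x hx, neg_neg]
  rw [hτ₁, hlog, mul_div_cancel_left₀ _ (hτ0 x hx)]
  ring

/-- If `-τ₀ = (1/(4u₀))[xu₀'/(u₀-1) - u₀]² + x²u₀/(u₀-1)²` and
`-τ₀' = -x/(4u₀(u₀-1))[u₀' - u₀(u₀-1)/x]² - xu₀/(u₀-1)`, and
`-τ₁ = (1/(4u₀))[xu₀'/(u₀-1) - u₀]² - u₀ + x²u₀/(u₀-1)²`, then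
`τ₁ = 1 + τ₀ - xτ₀'/τ₀`. -/
theorem stmt13 (u₀ τ₀ τ₁ : ℝ → ℝ)
    (hdiff : ∀ x ∈ Set.Ioi (0 : ℝ), DifferentiableAt ℝ u₀ x)
    (hu0 : ∀ x ∈ Set.Ioi (0 : ℝ), u₀ x ≠ 0)
    (hu1 : ∀ x ∈ Set.Ioi (0 : ℝ), u₀ x ≠ 1)
    (hτ0 : ∀ x ∈ Set.Ioi (0 : ℝ), τ₀ x ≠ 0)
    (hrel0 : ∀ x ∈ Set.Ioi (0 : ℝ), -τ₀ x =
      (1 / (4 * u₀ x)) * (x * deriv u₀ x / (u₀ x - 1) - u₀ x) ^ 2 +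
        x ^ 2 * u₀ x / (u₀ x - 1) ^ 2)
    (hrel0' : ∀ x ∈ Set.Ioi (0 : ℝ), HasDerivAt τ₀
      (-(-(x / (4 * u₀ x * (u₀ x - 1))) *
          (deriv u₀ x - u₀ x * (u₀ x - 1) / x) ^ 2 -
        x * u₀ x / (u₀ x - 1))) x)
    (hrel1 : ∀ x ∈ Set.Ioi (0 : ℝ), -τ₁ x =
      (1 / (4 * u₀ x)) * (x * deriv u₀ x / (u₀ x - 1) - u₀ x) ^ 2 - u₀ x +
        x ^ 2 * u₀ x / (u₀ x - 1) ^ 2) :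
    ∀ x ∈ Set.Ioi (0 : ℝ), τ₁ x = 1 + τ₀ x - x * deriv τ₀ x / τ₀ x :=
  stmt13_general u₀ τ₀ τ₁ hu1 hτ0 hrel0 hrel0' hrel1
end

section
/- Suppose smooth functions q, p, u, w, R, R₀ on (0,∞) satisfy: u' = -2q², w' = -2p², (1+s²)q' = -asq + (β₀-(2a-1)u)p + 2(1+s²)q²p/s, (1+s²)p' = asp - (γ₀+(2a+1)w)q - 2(1+s²)qp²/s, (1+s²)R = (γ₀+(2a+1)w)q² + (β₀-(2a-1)u)p² - 2asqp + 2s(1+s²)R₀², with R₀ = qp/s, and all of u, w, q, p, (1+s²)R tend to 0 as s → ∞. Then the integral of motion [γ₀+(2a+1)w][β₀-(2a-1)u] = β₀γ₀ - 2sσ - 4a(1+s²)qp holds, where σ := (1+s²)R. -/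
/-!
Let `F` be the difference of the two sides of the identity. A direct computation from the
equations of motion gives `F' = 0`, so `F ≡ c` on `(0,∞)`. As `s → ∞` everything in `F` except
the coupling term `2s(Wq² + Up²) + 4(1+s²)q²p²` tends to zero (`W, U` the brackets), so that
term tends to `c`. If `c ≠ 0` it forces `q² + p² ≥ δ/s` for large `s`; but
`q² + p² = -(u + w)'/2` and `u + w` converges, which is incompatible with the divergence of
`∫ δ/s`. Hence `c = 0`.
-/

open Filter Set Topology

theorem tendsto_atTop_of_div_le_deriv {F f : ℝ → ℝ} {δ : ℝ} (hδ : 0 < δ)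
    (hF : ∀ᶠ t in atTop, HasDerivAt F (f t) t) (hf : ∀ᶠ t in atTop, δ / t ≤ f t) :
    Tendsto F atTop atTop := by
  obtain ⟨s₀, hs₀⟩ := (hF.and (hf.and (eventually_gt_atTop 0))).exists_forall_of_atTop
  have hlog : ∀ t ∈ Ici s₀, HasDerivAt (fun t => F t - δ * Real.log t) (f t - δ * t⁻¹) t :=
    fun t ht => (hs₀ t ht).1.sub ((Real.hasDerivAt_log (hs₀ t ht).2.2.ne').const_mul δ)
  have hmono : MonotoneOn (fun t => F t - δ * Real.log t) (Ici s₀) := by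
    refine monotoneOn_of_hasDerivWithinAt_nonneg (f' := fun t => f t - δ * t⁻¹) (convex_Ici s₀)
      (fun t ht => (hlog t ht).continuousAt.continuousWithinAt) (fun t ht => ?_) (fun t ht => ?_)
    · exact (hlog t (interior_subset ht)).hasDerivWithinAt
    · rw [sub_nonneg, ← div_eq_mul_inv]
      exact (hs₀ t (interior_subset ht)).2.1
  have hlower : Tendsto (fun t => δ * Real.log t + (F s₀ - δ * Real.log s₀)) atTop atTop :=
    tendsto_atTop_add_const_right _ _ (Real.tendsto_log_atTop.const_mul_atTop hδ)
  refine tendsto_atTop_mono' atTop ?_ hlower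
  filter_upwards [eventually_ge_atTop s₀] with t ht
  have := hmono self_mem_Ici ht ht
  dsimp only at this
  linarith

def coupling (t W U Q P : ℝ) : ℝ :=
  2 * t * (W * Q ^ 2 + U * P ^ 2) + 4 * (1 + t ^ 2) * (Q * P) ^ 2

theorem abs_coupling_le {t W U Q P K : ℝ} (ht : 1 ≤ t) (hW : |W| ≤ K) (hU : |U| ≤ K) :
    |coupling t W U Q P| ≤ 2 * K * (t * (Q ^ 2 + P ^ 2)) + 2 * (t * (Q ^ 2 + P ^ 2)) ^ 2 := by
  have hlin : |W * Q ^ 2 + U * P ^ 2| ≤ K * (Q ^ 2 + P ^ 2) :=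
    calc |W * Q ^ 2 + U * P ^ 2| ≤ |W| * Q ^ 2 + |U| * P ^ 2 := by
          have := abs_add_le (W * Q ^ 2) (U * P ^ 2)
          rwa [abs_mul, abs_mul, abs_pow, abs_pow, sq_abs, sq_abs] at this
      _ ≤ K * (Q ^ 2 + P ^ 2) := by nlinarith [sq_nonneg Q, sq_nonneg P]
  have hquad : 4 * (1 + t ^ 2) * (Q * P) ^ 2 ≤ 2 * (t * (Q ^ 2 + P ^ 2)) ^ 2 := by
    have h1 : 1 + t ^ 2 ≤ 2 * t ^ 2 := by nlinarith
    have h2 : 4 * (Q * P) ^ 2 ≤ (Q ^ 2 + P ^ 2) ^ 2 := by nlinarith [sq_nonneg (Q ^ 2 - P ^ 2)]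
    nlinarith [mul_le_mul h1 h2 (by positivity) (by positivity)]
  calc |coupling t W U Q P|
      ≤ 2 * t * |W * Q ^ 2 + U * P ^ 2| + 4 * (1 + t ^ 2) * (Q * P) ^ 2 := by
        unfold coupling
        refine (abs_add_le _ _).trans ?_
        rw [abs_mul, abs_of_nonneg (by positivity : (0 : ℝ) ≤ 2 * t),
          abs_of_nonneg (by positivity : (0 : ℝ) ≤ 4 * (1 + t ^ 2) * (Q * P) ^ 2)]
    _ ≤ _ := by nlinarith

theorem exists_div_le_sq_add_sq_of_tendsto_coupling {W U q p : ℝ → ℝ} {γ β c : ℝ}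
    (hW : Tendsto W atTop (𝓝 γ)) (hU : Tendsto U atTop (𝓝 β))
    (hG : Tendsto (fun t => coupling t (W t) (U t) (q t) (p t)) atTop (𝓝 c)) (hc : c ≠ 0) :
    ∃ δ > 0, ∀ᶠ t in atTop, δ / t ≤ q t ^ 2 + p t ^ 2 := by
  set K := |γ| + |β| + 1
  have hK : 0 < K := by positivity
  refine ⟨min 1 (|c| / (4 * K + 4)), by positivity, ?_⟩
  have hWK : ∀ᶠ t in atTop, |W t| < K :=
    hW.abs.eventually_lt_const (by linarith [abs_nonneg β])
  have hUK : ∀ᶠ t in atTop, |U t| < K :=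
    hU.abs.eventually_lt_const (by linarith [abs_nonneg γ])
  have hGc : ∀ᶠ t in atTop, |c| / 2 < |coupling t (W t) (U t) (q t) (p t)| :=
    hG.abs.eventually_const_lt (by simpa using abs_pos.mpr hc)
  filter_upwards [hWK, hUK, hGc, eventually_ge_atTop 1] with t hWt hUt hGt ht
  have hbound := abs_coupling_le (Q := q t) (P := p t) ht hWt.le hUt.le
  set Y := t * (q t ^ 2 + p t ^ 2)
  have hY : 0 ≤ Y := by positivity
  rw [div_le_iff₀ (by linarith), mul_comm _ t]
  refine le_of_not_gt fun hlt => ?_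
  have hY1 : Y < 1 := hlt.trans_le (min_le_left _ _)
  have hYc : Y < |c| / (4 * K + 4) := hlt.trans_le (min_le_right _ _)
  rw [lt_div_iff₀ (by positivity)] at hYc
  nlinarith

section IntegralOfMotion

variable (a β₀ γ₀ : ℝ) (q p u w : ℝ → ℝ)

/-- The difference of the two sides of the integral of motion, with `2sσ` expanded through the
formula for `(1+s²)R`. -/
def motionDefect (s : ℝ) : ℝ :=
  (γ₀ + (2 * a + 1) * w s) * (β₀ - (2 * a - 1) * u s) - β₀ * γ₀ + 4 * a * (q s * p s) +
    coupling s (γ₀ + (2 * a + 1) * w s) (β₀ - (2 * a - 1) * u s) (q s) (p s)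

variable {a β₀ γ₀ q p u w}

theorem hasDerivAt_motionDefect {s : ℝ} (hs : 0 < s)
    (hu : HasDerivAt u (-2 * (q s) ^ 2) s) (hw : HasDerivAt w (-2 * (p s) ^ 2) s)
    (hq : HasDerivAt q
      ((-(a * s) * q s + (β₀ - (2 * a - 1) * u s) * p s +
        2 * (1 + s ^ 2) * (q s) ^ 2 * p s / s) / (1 + s ^ 2)) s)
    (hp : HasDerivAt p
      ((a * s * p s - (γ₀ + (2 * a + 1) * w s) * q s -
        2 * (1 + s ^ 2) * q s * (p s) ^ 2 / s) / (1 + s ^ 2)) s) :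
    HasDerivAt (motionDefect a β₀ γ₀ q p u w) 0 s := by
  have hW := (hw.const_mul (2 * a + 1)).const_add γ₀
  have hU := (hu.const_mul (2 * a - 1)).const_sub β₀
  have hcoupling := (((hasDerivAt_id s).const_mul 2).mul
      ((hW.mul (hq.pow 2)).add (hU.mul (hp.pow 2)))).add
    ((((hasDerivAt_id s).pow 2).const_add 1).const_mul 4 |>.mul ((hq.mul hp).pow 2))
  have hdefect := (((hW.mul hU).sub_const (β₀ * γ₀)).add ((hq.mul hp).const_mul (4 * a))).add
    hcoupling
  refine hdefect.congr_deriv ?_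
  simp only [Pi.add_apply, Pi.mul_apply, Pi.pow_apply, id]
  field_simp
  ring

theorem motionDefect_eq_zero
    (hu : ∀ s ∈ Ioi (0 : ℝ), HasDerivAt u (-2 * (q s) ^ 2) s)
    (hw : ∀ s ∈ Ioi (0 : ℝ), HasDerivAt w (-2 * (p s) ^ 2) s)
    (hF : ∀ s ∈ Ioi (0 : ℝ), HasDerivAt (motionDefect a β₀ γ₀ q p u w) 0 s)
    (hq0 : Tendsto q atTop (𝓝 0)) (hp0 : Tendsto p atTop (𝓝 0))
    (hu0 : Tendsto u atTop (𝓝 0)) (hw0 : Tendsto w atTop (𝓝 0)) {s : ℝ} (hs : 0 < s) :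
    motionDefect a β₀ γ₀ q p u w s = 0 := by
  set c := motionDefect a β₀ γ₀ q p u w s
  have hconst : ∀ t ∈ Ioi (0 : ℝ), motionDefect a β₀ γ₀ q p u w t = c := fun t ht =>
    isOpen_Ioi.is_const_of_deriv_eq_zero isPreconnected_Ioi
      (fun x hx => (hF x hx).differentiableAt.differentiableWithinAt)
      (fun x hx => (hF x hx).deriv) ht hs
  have hW := (hw0.const_mul (2 * a + 1)).const_add γ₀
  have hU := (hu0.const_mul (2 * a - 1)).const_sub β₀
  have hcoupling : Tendsto (fun t => coupling t (γ₀ + (2 * a + 1) * w t)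
      (β₀ - (2 * a - 1) * u t) (q t) (p t)) atTop (𝓝 c) := by
    have hlim := ((tendsto_const_nhds (x := c)).sub ((hW.mul hU).sub_const (β₀ * γ₀))).sub
      ((hq0.mul hp0).const_mul (4 * a))
    rw [show c - ((γ₀ + (2 * a + 1) * 0) * (β₀ - (2 * a - 1) * 0) - β₀ * γ₀) - 4 * a * (0 * 0)
      = c by ring] at hlim
    refine hlim.congr' ?_
    filter_upwards [eventually_gt_atTop 0] with t ht
    rw [← hconst t ht, motionDefect]
    ring
  by_contra hc
  obtain ⟨δ, hδ, hδle⟩ := exists_div_le_sq_add_sq_of_tendsto_coupling hW hU hcoupling hc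
  have hderiv : ∀ᶠ t in atTop, HasDerivAt (fun t => -(u t + w t) / 2) (q t ^ 2 + p t ^ 2) t := by
    filter_upwards [eventually_gt_atTop 0] with t ht
    exact (((hu t ht).add (hw t ht)).neg.div_const 2).congr_deriv (by ring)
  exact not_tendsto_nhds_of_tendsto_atTop (tendsto_atTop_of_div_le_deriv hδ hderiv hδle) _
    ((hu0.add hw0).neg.div_const 2)

end IntegralOfMotion

theorem stmt15_general (a β₀ γ₀ : ℝ)
    (q p u w R R₀ : ℝ → ℝ)
    (hu : ∀ s ∈ Set.Ioi (0 : ℝ), HasDerivAt u (-2 * (q s) ^ 2) s)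
    (hw : ∀ s ∈ Set.Ioi (0 : ℝ), HasDerivAt w (-2 * (p s) ^ 2) s)
    (hq : ∀ s ∈ Set.Ioi (0 : ℝ), HasDerivAt q
      ((-(a * s) * q s + (β₀ - (2 * a - 1) * u s) * p s +
        2 * (1 + s ^ 2) * (q s) ^ 2 * p s / s) / (1 + s ^ 2)) s)
    (hp : ∀ s ∈ Set.Ioi (0 : ℝ), HasDerivAt p
      ((a * s * p s - (γ₀ + (2 * a + 1) * w s) * q s -
        2 * (1 + s ^ 2) * q s * (p s) ^ 2 / s) / (1 + s ^ 2)) s)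
    (hR : ∀ s ∈ Set.Ioi (0 : ℝ), (1 + s ^ 2) * R s =
      (γ₀ + (2 * a + 1) * w s) * (q s) ^ 2 + (β₀ - (2 * a - 1) * u s) * (p s) ^ 2 -
        2 * a * s * (q s * p s) + 2 * s * (1 + s ^ 2) * (R₀ s) ^ 2)
    (hR₀ : ∀ s ∈ Set.Ioi (0 : ℝ), R₀ s = q s * p s / s)
    (hq0 : Tendsto q atTop (nhds 0)) (hp0 : Tendsto p atTop (nhds 0))
    (hu0 : Tendsto u atTop (nhds 0)) (hw0 : Tendsto w atTop (nhds 0)) :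
    ∀ s ∈ Set.Ioi (0 : ℝ),
      (γ₀ + (2 * a + 1) * w s) * (β₀ - (2 * a - 1) * u s) =
        β₀ * γ₀ - 2 * s * ((1 + s ^ 2) * R s) - 4 * a * (1 + s ^ 2) * (q s * p s) := by
  intro s hs
  have hF : ∀ t ∈ Ioi (0 : ℝ), HasDerivAt (motionDefect a β₀ γ₀ q p u w) 0 t := fun t ht =>
    hasDerivAt_motionDefect ht (hu t ht) (hw t ht) (hq t ht) (hp t ht)
  have hzero := motionDefect_eq_zero hu hw hF hq0 hp0 hu0 hw0 hs
  have hs_ne : s ≠ 0 := hs.ne'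
  rw [hR s hs, hR₀ s hs]
  rw [motionDefect, coupling] at hzero
  field_simp
  linear_combination hzero

/-- Integral of motion
`[γ₀+(2a+1)w][β₀-(2a-1)u] = β₀γ₀ - 2sσ - 4a(1+s²)qp`, `σ := (1+s²)R`,
for the Tracy–Widom coupled system of the Cauchy unitary ensemble on the symmetric
double interval `(-∞,-s) ∪ (s,∞)`. -/
theorem stmt15 (a β₀ γ₀ : ℝ) (ha : 1 / 2 < a)
    (q p u w R R₀ : ℝ → ℝ)
    (hu : ∀ s ∈ Set.Ioi (0 : ℝ), HasDerivAt u (-2 * (q s) ^ 2) s)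
    (hw : ∀ s ∈ Set.Ioi (0 : ℝ), HasDerivAt w (-2 * (p s) ^ 2) s)
    (hq : ∀ s ∈ Set.Ioi (0 : ℝ), HasDerivAt q
      ((-(a * s) * q s + (β₀ - (2 * a - 1) * u s) * p s +
        2 * (1 + s ^ 2) * (q s) ^ 2 * p s / s) / (1 + s ^ 2)) s)
    (hp : ∀ s ∈ Set.Ioi (0 : ℝ), HasDerivAt p
      ((a * s * p s - (γ₀ + (2 * a + 1) * w s) * q s -
        2 * (1 + s ^ 2) * q s * (p s) ^ 2 / s) / (1 + s ^ 2)) s)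
    (hR : ∀ s ∈ Set.Ioi (0 : ℝ), (1 + s ^ 2) * R s =
      (γ₀ + (2 * a + 1) * w s) * (q s) ^ 2 + (β₀ - (2 * a - 1) * u s) * (p s) ^ 2 -
        2 * a * s * (q s * p s) + 2 * s * (1 + s ^ 2) * (R₀ s) ^ 2)
    (hR₀ : ∀ s ∈ Set.Ioi (0 : ℝ), R₀ s = q s * p s / s)
    (hq0 : Tendsto q atTop (nhds 0)) (hp0 : Tendsto p atTop (nhds 0))
    (hu0 : Tendsto u atTop (nhds 0)) (hw0 : Tendsto w atTop (nhds 0))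
    (hσ0 : Tendsto (fun s => (1 + s ^ 2) * R s) atTop (nhds 0)) :
    ∀ s ∈ Set.Ioi (0 : ℝ),
      (γ₀ + (2 * a + 1) * w s) * (β₀ - (2 * a - 1) * u s) =
        β₀ * γ₀ - 2 * s * ((1 + s ^ 2) * R s) - 4 * a * (1 + s ^ 2) * (q s * p s) :=
  stmt15_general a β₀ γ₀ q p u w R R₀ hu hw hq hp hR hR₀ hq0 hp0 hu0 hw0
end

section
/- Let q, p satisfy the Bessel-kernel system with u' = 2q², w' = 2p², 2qp = w - u, namely xq' = xp + (-a - 2qp)q and xp' = -xq + (a + 2qp)p. Eliminating q via q = (xp' - ap)/(2p² - x) yields the second-order ODE p'' = [2p/(2p²-x)](p')² - [2p²/(x(2p²-x))]p' + (p/x)(2p²-x) + a(1-a)p/(x(2p²-x)). -/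
/-- Eliminating `q` via `q = (xp' - ap)/(2p² - x)` from the reduced Bessel-kernel system
`xq' = xp + (-a - 2qp)q`, `xp' = -xq + (a + 2qp)p` yields the second-order ODE
`p'' = [2p/(2p²-x)](p')² - [2p²/(x(2p²-x))]p' + (p/x)(2p²-x) + a(1-a)p/(x(2p²-x))`. -/
theorem stmt17 (a : ℝ) (q p : ℝ → ℝ)
    (hside : ∀ x ∈ Set.Ioi (0 : ℝ), 2 * (p x) ^ 2 - x ≠ 0)
    (hq : ∀ x ∈ Set.Ioi (0 : ℝ), HasDerivAt q
      ((x * p x + (-a - 2 * (q x * p x)) * q x) / x) x)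
    (hp : ∀ x ∈ Set.Ioi (0 : ℝ), HasDerivAt p
      ((-(x * q x) + (a + 2 * (q x * p x)) * p x) / x) x) :
    ∀ x ∈ Set.Ioi (0 : ℝ),
      deriv (deriv p) x =
        (2 * p x / (2 * (p x) ^ 2 - x)) * (deriv p x) ^ 2 -
          (2 * (p x) ^ 2 / (x * (2 * (p x) ^ 2 - x))) * deriv p x +
          (p x / x) * (2 * (p x) ^ 2 - x) +
          a * (1 - a) * p x / (x * (2 * (p x) ^ 2 - x)) := by
  intro x hx
  have hx0 : x ≠ 0 := ne_of_gt hx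
  have hs := hside x hx
  have hqx := hq x hx
  have hpx := hp x hx
  have hF := ((((hasDerivAt_id' (x := x)).mul hqx).neg.add
      (((hasDerivAt_const x a).add ((hasDerivAt_const x 2).mul (hqx.mul hpx))).mul
        hpx)).div (hasDerivAt_id' (x := x)) hx0)
  have hev : deriv p =ᶠ[nhds x]
      fun y => (-(y * q y) + (a + 2 * (q y * p y)) * p y) / y := by
    filter_upwards [Ioi_mem_nhds hx] with y hy using (hp y hy).deriv
  rw [hev.deriv_eq, (show HasDerivAt (fun y => (-(y * q y) + (a + 2 * (q y * p y)) * p y) / y) _ x from hF).deriv, hpx.deriv]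
  simp only [Pi.mul_apply, Pi.add_apply, Pi.neg_apply]
  have hD : -x + p x ^ 2 * 2 ≠ 0 := by contrapose! hs; linarith
  field_simp
  ring_nf
  field_simp
  ring
end

section
/- If p satisfies p'' = [2p/(2p²-x)](p')² - [2p²/(x(2p²-x))]p' + (p/x)(2p²-x) + a(1-a)p/(x(2p²-x)), then y defined by p = -√(x/2)·(1+y)/(1-y) satisfies the Painlevé V equation y'' = (1/(2y) + 1/(y-1))(y')² - y'/x + (y-1)²/x² · (αy + β/y) + γ y/x + δ y(y+1)/(y-1), with parameters α = (1-2a)²/32, β = -(1-2a)²/32, γ = 0, δ = -2. -/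
open Set Filter

private lemma solve_linear {C D Ypp R T : ℝ} (hD : D ≠ 0)
    (E : C + D * Ypp = R) (h : R - C = D * T) : Ypp = T := by
  have h2 : D * Ypp = D * T := by linarith
  exact mul_left_cancel₀ hD h2

private lemma stmt18_aux (a s x Y Y' Y'' : ℝ) (hx2 : x = 2 * s ^ 2)
    (hs : s ≠ 0) (h0 : Y ≠ 0) (h1 : Y ≠ 1)
    (E : (-(4 * s * (1 - Y) * Y' - (1 + Y) * ((1 - Y) / s - 4 * s * Y')) /
            (16 * s ^ 2 * (1 - Y) ^ 2) -
          (Y' / (2 * s) * (1 - Y) + 4 * s * Y' ^ 2) / (1 - Y) ^ 3) +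
        (-(2 * s) / (1 - Y) ^ 2) * Y'' =
        2 * (-s * (1 + Y) / (1 - Y)) / (2 * (-s * (1 + Y) / (1 - Y)) ^ 2 - x) *
            (-(1 + Y) / (4 * s * (1 - Y)) - 2 * s * Y' / (1 - Y) ^ 2) ^ 2 -
          2 * (-s * (1 + Y) / (1 - Y)) ^ 2 /
              (x * (2 * (-s * (1 + Y) / (1 - Y)) ^ 2 - x)) *
            (-(1 + Y) / (4 * s * (1 - Y)) - 2 * s * Y' / (1 - Y) ^ 2) +
          (-s * (1 + Y) / (1 - Y)) / x * (2 * (-s * (1 + Y) / (1 - Y)) ^ 2 - x) +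
          a * (1 - a) * (-s * (1 + Y) / (1 - Y)) /
            (x * (2 * (-s * (1 + Y) / (1 - Y)) ^ 2 - x))) :
    Y'' = (1 / (2 * Y) + 1 / (Y - 1)) * Y' ^ 2 - Y' / x +
        (Y - 1) ^ 2 / x ^ 2 *
          ((1 - 2 * a) ^ 2 / 32 * Y + (-(1 - 2 * a) ^ 2 / 32) / Y) +
        0 * Y / x + (-2) * Y * (Y + 1) / (Y - 1) := by
  subst hx2
  have hu : (1 : ℝ) - Y ≠ 0 := sub_ne_zero.mpr (Ne.symm h1)
  have hu' : Y - 1 ≠ 0 := sub_ne_zero.mpr h1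
  have hkey : 2 * (-s * (1 + Y) / (1 - Y)) ^ 2 - 2 * s ^ 2 =
      8 * s ^ 2 * Y / (1 - Y) ^ 2 := by
    field_simp
    ring
  rw [hkey] at E
  have hD : (-(2 * s) / (1 - Y) ^ 2) ≠ 0 :=
    div_ne_zero (neg_ne_zero.mpr (mul_ne_zero two_ne_zero hs)) (pow_ne_zero _ hu)
  refine solve_linear hD E ?_
  have h8 : 8 * s ^ 2 * Y / (1 - Y) ^ 2 ≠ 0 :=
    div_ne_zero (mul_ne_zero (mul_ne_zero (by norm_num) (pow_ne_zero _ hs)) h0)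
      (pow_ne_zero _ hu)
  field_simp
  ring

set_option maxHeartbeats 2000000 in
/-- If `p` satisfies
`p'' = [2p/(2p²-x)](p')² - [2p²/(x(2p²-x))]p' + (p/x)(2p²-x) + a(1-a)p/(x(2p²-x))`,
then `y` defined by `p = -√(x/2)(1+y)/(1-y)` satisfies the Painlevé V equation with
parameters `α = (1-2a)²/32`, `β = -(1-2a)²/32`, `γ = 0`, `δ = -2`. -/
theorem stmt18 (a : ℝ) (p y : ℝ → ℝ)
    (hpsmooth : ContDiffOn ℝ (⊤ : ℕ∞) p (Set.Ioi 0))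
    (hysmooth : ContDiffOn ℝ (⊤ : ℕ∞) y (Set.Ioi 0))
    (hy0 : ∀ x ∈ Set.Ioi (0 : ℝ), y x ≠ 0)
    (hy1 : ∀ x ∈ Set.Ioi (0 : ℝ), y x ≠ 1)
    (hside : ∀ x ∈ Set.Ioi (0 : ℝ), 2 * (p x) ^ 2 - x ≠ 0)
    (hrel : ∀ x ∈ Set.Ioi (0 : ℝ),
      p x = -Real.sqrt (x / 2) * (1 + y x) / (1 - y x))
    (hode : ∀ x ∈ Set.Ioi (0 : ℝ),
      deriv (deriv p) x =
        (2 * p x / (2 * (p x) ^ 2 - x)) * (deriv p x) ^ 2 -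
          (2 * (p x) ^ 2 / (x * (2 * (p x) ^ 2 - x))) * deriv p x +
          (p x / x) * (2 * (p x) ^ 2 - x) +
          a * (1 - a) * p x / (x * (2 * (p x) ^ 2 - x))) :
    ∀ x ∈ Set.Ioi (0 : ℝ),
      deriv (deriv y) x =
        (1 / (2 * y x) + 1 / (y x - 1)) * (deriv y x) ^ 2 - deriv y x / x +
          (y x - 1) ^ 2 / x ^ 2 *
            ((1 - 2 * a) ^ 2 / 32 * y x + (-(1 - 2 * a) ^ 2 / 32) / y x) +
          0 * y x / x +
          (-2) * y x * (y x + 1) / (y x - 1) := by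
  have hyd : ∀ t ∈ Set.Ioi (0:ℝ), HasDerivAt y (deriv y t) t := fun t ht =>
    ((hysmooth.contDiffAt (isOpen_Ioi.mem_nhds ht)).differentiableAt (by simp)).hasDerivAt
  have hydd : ∀ t ∈ Set.Ioi (0:ℝ), HasDerivAt (deriv y) (deriv (deriv y) t) t := fun t ht =>
    (((hysmooth.deriv_of_isOpen isOpen_Ioi (by exact WithTop.coe_le_coe.mpr le_top)).contDiffAt
      (isOpen_Ioi.mem_nhds ht)).differentiableAt one_ne_zero).hasDerivAt
  have hsd : ∀ t ∈ Set.Ioi (0:ℝ),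
      HasDerivAt (fun u : ℝ => Real.sqrt (u / 2)) (1 / (4 * Real.sqrt (t / 2))) t := by
    intro t ht
    have ht' : (0:ℝ) < t := ht
    have h1 : HasDerivAt (fun u : ℝ => u / 2) (1 / 2) t := (hasDerivAt_id t).div_const 2
    have h2 := (Real.hasDerivAt_sqrt (by positivity : (t:ℝ)/2 ≠ 0)).comp t h1
    have hst : Real.sqrt (t / 2) ≠ 0 := by positivity
    rw [show (1 / (4 * Real.sqrt (t / 2))) = 1 / (2 * Real.sqrt (t / 2)) * (1 / 2) by ring]
    exact h2
  have hderivp : ∀ t ∈ Set.Ioi (0:ℝ),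
      deriv p t = -(1 + y t) / (4 * Real.sqrt (t / 2) * (1 - y t)) -
        2 * Real.sqrt (t / 2) * deriv y t / (1 - y t) ^ 2 := by
    intro t ht
    have ht' : (0:ℝ) < t := ht
    have hst : Real.sqrt (t / 2) ≠ 0 := by positivity
    have h1t : (1:ℝ) - y t ≠ 0 := sub_ne_zero.mpr (Ne.symm (hy1 t ht))
    have hF := (((hsd t ht).neg.mul ((hyd t ht).const_add 1)).div
      ((hyd t ht).const_sub 1) h1t)
    have hEq : deriv p t =
        deriv (fun u => -Real.sqrt (u / 2) * (1 + y u) / (1 - y u)) t :=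
      (Filter.eventuallyEq_of_mem (isOpen_Ioi.mem_nhds ht) hrel).deriv_eq
    rw [hEq, (show HasDerivAt (fun u => -Real.sqrt (u / 2) * (1 + y u) / (1 - y u)) _ t from hF).deriv]
    simp only [Pi.mul_apply, Pi.neg_apply, Pi.div_apply, Pi.sub_apply, Pi.pow_apply]
    field_simp
    ring
  intro x hx
  have hx' : (0:ℝ) < x := hx
  have hsx : Real.sqrt (x / 2) ≠ 0 := by positivity
  have h1x : (1:ℝ) - y x ≠ 0 := sub_ne_zero.mpr (Ne.symm (hy1 x hx))
  have hden1 : 4 * Real.sqrt (x / 2) * (1 - y x) ≠ 0 :=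
    mul_ne_zero (mul_ne_zero (by norm_num) hsx) h1x
  have hden2 : ((1:ℝ) - y x) ^ 2 ≠ 0 := pow_ne_zero _ h1x
  have hraw := ((((hyd x hx).const_add 1).neg.div
      (((hsd x hx).const_mul 4).mul ((hyd x hx).const_sub 1)) hden1).sub
    ((((hsd x hx).const_mul 2).mul (hydd x hx)).div
      (((hyd x hx).const_sub 1).pow 2) hden2))
  have hdd : deriv (deriv p) x =
      deriv (fun t => -(1 + y t) / (4 * Real.sqrt (t / 2) * (1 - y t)) -
        2 * Real.sqrt (t / 2) * deriv y t / (1 - y t) ^ 2) x :=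
    (Filter.eventuallyEq_of_mem (isOpen_Ioi.mem_nhds hx) hderivp).deriv_eq
  have hdd2 : deriv (deriv p) x =
      (-(4 * Real.sqrt (x / 2) * (1 - y x) * deriv y x -
          (1 + y x) * ((1 - y x) / Real.sqrt (x / 2) -
            4 * Real.sqrt (x / 2) * deriv y x)) /
          (16 * Real.sqrt (x / 2) ^ 2 * (1 - y x) ^ 2) -
        (deriv y x / (2 * Real.sqrt (x / 2)) * (1 - y x) +
          4 * Real.sqrt (x / 2) * deriv y x ^ 2) / (1 - y x) ^ 3) +
      (-(2 * Real.sqrt (x / 2)) / (1 - y x) ^ 2) * deriv (deriv y) x := by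
    rw [hdd, (show HasDerivAt (fun t => -(1 + y t) / (4 * Real.sqrt (t / 2) * (1 - y t)) -
        2 * Real.sqrt (t / 2) * deriv y t / (1 - y t) ^ 2) _ x from hraw).deriv]
    simp only [Pi.mul_apply, Pi.neg_apply, Pi.div_apply, Pi.sub_apply, Pi.pow_apply, Nat.cast_ofNat]
    obtain ⟨s, hs_eq, hs_ne⟩ : ∃ s, Real.sqrt (x / 2) = s ∧ s ≠ 0 := ⟨_, rfl, hsx⟩
    rw [hs_eq]
    field_simp
    ring
  have E := hode x hx
  rw [hdd2, hderivp x hx, hrel x hx] at E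
  have hx2 : x = 2 * Real.sqrt (x / 2) ^ 2 := by
    rw [Real.sq_sqrt (by positivity : (0:ℝ) ≤ x / 2)]; ring
  exact stmt18_aux a (Real.sqrt (x / 2)) x (y x) (deriv y x) (deriv (deriv y) x)
    hx2 hsx (hy0 x hx) (hy1 x hx) E
end
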